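/- arXiv:1507.08024 — 5 statements merged into one kernel-verified Lean document; each statement's English description precedes it below -/
import Mathlib

section
/- For every w ∈ W, the double coset W_H·w·W_J contains at least one element of D_{H,J}. -/
/-!
Choose `d` in the double coset `W_H w W_J` with the fewest inversions, i.e. positive roots
sent to negative ones. If `d α < 0` for some `α ∈ J`, then `d s_α` lies in the same double coset
and has fewer inversions; if `d⁻¹ β < 0` for some `β ∈ Δ_H`, the same holds for `s_β d`, because
`x` and `x⁻¹` have equally many inversions. The decrease `l(x s_γ) < l(x)` for a positive root `γ`
with `x γ < 0` comes from the injection `δ ↦ (s_γ δ if s_γ δ > 0, else δ)` of the inversions of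
`x s_γ` into those of `x` other than `γ`.
-/

noncomputable section

open scoped RealInnerProductSpace

variable (V : Type*) [NormedAddCommGroup V] [InnerProductSpace ℝ V] [FiniteDimensional ℝ V]

/-- The reflection in the hyperplane orthogonal to `α`. -/
def rsRefl (α : V) : V ≃ₗᵢ[ℝ] V := Submodule.reflection (ℝ ∙ α)ᗮ

variable {V}

/-- The subgroup of `O(V)` generated by the reflections in the elements of `RS`. -/
def weylGroupOf (RS : Set V) : Subgroup (V ≃ₗᵢ[ℝ] V) := Subgroup.closure (rsRefl V '' RS)

variable (V)

/-- Data of a finite (possibly non-reduced) root system in `V` together with a positive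
system cut out by a linear functional. -/
structure RootSystemData where
  R : Set V
  finR : R.Finite
  zero_notMem : (0 : V) ∉ R
  posFun : V →ₗ[ℝ] ℝ
  posFun_ne : ∀ α ∈ R, posFun α ≠ 0
  reflect_mem : ∀ α ∈ R, ∀ β ∈ R, rsRefl V α β ∈ R

namespace RootSystemData

variable {V}
variable (S : RootSystemData V)

/-- The positive roots `R⁺`. -/
def pos : Set V := {α ∈ S.R | 0 < S.posFun α}

/-- The negative roots `R⁻ = −R⁺`. -/
def neg : Set V := {α | -α ∈ S.pos}

/-- The simple roots of the positive system `RS ∩ R⁺` of a subsystem `RS`, i.e. its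
indecomposable elements. -/
def simpleOf (RS : Set V) : Set V :=
  {α ∈ RS ∩ S.pos | ¬ ∃ β ∈ RS ∩ S.pos, ∃ γ ∈ RS ∩ S.pos, α = β + γ}

/-- The set `Δ` of simple roots of `R⁺`. -/
def simple : Set V := S.simpleOf S.R

/-- The Weyl group `W`. -/
def W : Subgroup (V ≃ₗᵢ[ℝ] V) := weylGroupOf S.R

/-- `D_H := {w ∈ W : w⁻¹(Δ_H) ⊆ R⁺}`. -/
def DH (RH : Set V) : Set (V ≃ₗᵢ[ℝ] V) :=
  {w | w ∈ S.W ∧ ∀ α ∈ S.simpleOf RH, w⁻¹ α ∈ S.pos}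

/-- The standard parabolic subsystem `R_J := R ∩ span J`. -/
def RJ (J : Set V) : Set V := S.R ∩ (Submodule.span ℝ J : Set V)

/-- `D_J := {w ∈ W : w⁻¹(J) ⊆ R⁺}`. -/
def DJ (J : Set V) : Set (V ≃ₗᵢ[ℝ] V) := {w | w ∈ S.W ∧ ∀ α ∈ J, w⁻¹ α ∈ S.pos}

/-- `D_{H,J} := {w ∈ W : w(J) ⊆ R⁺ and w⁻¹(Δ_H) ⊆ R⁺}`. -/
def DHJ (RH J : Set V) : Set (V ≃ₗᵢ[ℝ] V) :=
  {w | w ∈ S.W ∧ (∀ α ∈ J, w α ∈ S.pos) ∧ ∀ α ∈ S.simpleOf RH, w⁻¹ α ∈ S.pos}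

/-- The subsystem `R_{M′(w)} := R_H ∩ w(R_J)`. -/
def RMprime (RH J : Set V) (w : V ≃ₗᵢ[ℝ] V) : Set V := RH ∩ (⇑w '' S.RJ J)

/-- `D_{M′(w)} := {x ∈ W : x⁻¹(Δ_{M′(w)}) ⊆ R⁺}`. -/
def DMprime (RH J : Set V) (w : V ≃ₗᵢ[ℝ] V) : Set (V ≃ₗᵢ[ℝ] V) :=
  {x | x ∈ S.W ∧ ∀ α ∈ S.simpleOf (S.RMprime RH J w), x⁻¹ α ∈ S.pos}

/-- `l_H(x) := #{α ∈ R_H⁺ : x(α) ∈ R⁻}`. -/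
def lH (RH : Set V) (x : V ≃ₗᵢ[ℝ] V) : ℕ :=
  Set.ncard {α | α ∈ RH ∩ S.pos ∧ x α ∈ S.neg}

end RootSystemData

/-- `a_J := {v ∈ V : ⟨α, v⟩ = 0 for all α ∈ J}`. -/
def aJset {V : Type*} [NormedAddCommGroup V] [InnerProductSpace ℝ V] (J : Set V) : Set V :=
  {v | ∀ α ∈ J, ⟪α, v⟫ = (0 : ℝ)}

section Reflection

variable {V : Type*} [NormedAddCommGroup V] [InnerProductSpace ℝ V]

lemma rsRefl_apply (γ δ : V) : rsRefl V γ δ = δ - (2 * (⟪γ, δ⟫ / ‖γ‖ ^ 2)) • γ := by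
  rw [rsRefl, Submodule.reflection_orthogonal_apply, Submodule.reflection_singleton_apply,
    neg_sub, RCLike.ofReal_real_eq_id, id]
  module

lemma rsRefl_apply_self (γ : V) : rsRefl V γ γ = -γ :=
  Submodule.reflection_orthogonalComplement_singleton_eq_neg γ

lemma rsRefl_rsRefl (γ δ : V) : rsRefl V γ (rsRefl V γ δ) = δ :=
  Submodule.reflection_reflection _ δ

lemma rsRefl_inv (γ : V) : (rsRefl V γ)⁻¹ = rsRefl V γ :=
  Submodule.reflection_inv

lemma rsRefl_mem_weylGroupOf {RS : Set V} {α : V} (hα : α ∈ RS) :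
    rsRefl V α ∈ weylGroupOf RS :=
  Subgroup.subset_closure ⟨α, hα, rfl⟩

lemma weylGroupOf_mono {RS RS' : Set V} (h : RS ⊆ RS') : weylGroupOf RS ≤ weylGroupOf RS' :=
  Subgroup.closure_mono (Set.image_mono h)

end Reflection

namespace DoubleCoset

variable {G : Type*} [Group G] {H K : Subgroup G} {a b : G}

lemma mul_right_mem_doubleCoset (hb : b ∈ doubleCoset a H K) {k : G} (hk : k ∈ K) :
    b * k ∈ doubleCoset a H K := by
  obtain ⟨h, hh, u, hu, rfl⟩ := mem_doubleCoset.1 hb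
  exact mem_doubleCoset.2 ⟨h, hh, u * k, K.mul_mem hu hk, by group⟩

lemma mul_left_mem_doubleCoset (hb : b ∈ doubleCoset a H K) {h : G} (hh : h ∈ H) :
    h * b ∈ doubleCoset a H K := by
  obtain ⟨h', hh', u, hu, rfl⟩ := mem_doubleCoset.1 hb
  exact mem_doubleCoset.2 ⟨h * h', H.mul_mem hh hh', u, hu, by group⟩

end DoubleCoset

namespace RootSystemData

open Set

variable {V : Type*} [NormedAddCommGroup V] [InnerProductSpace ℝ V] (S : RootSystemData V)

lemma pos_subset : S.pos ⊆ S.R := fun _ h => h.1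

lemma neg_mem {α : V} (hα : α ∈ S.R) : -α ∈ S.R := by
  simpa [rsRefl_apply_self] using S.reflect_mem α hα α hα

lemma neg_mem_neg_iff {α : V} : -α ∈ S.neg ↔ α ∈ S.pos := by
  rw [neg, mem_ofPred_eq, neg_neg]

lemma mem_neg_iff {α : V} (hα : α ∈ S.R) : α ∈ S.neg ↔ S.posFun α < 0 := by
  simp [neg, pos, S.neg_mem hα]

lemma notMem_neg_of_mem_pos {α : V} (h : α ∈ S.pos) : α ∉ S.neg := fun h' =>
  (h.2.trans ((S.mem_neg_iff h.1).1 h')).false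

lemma mem_neg_of_notMem_pos {α : V} (hα : α ∈ S.R) (h : α ∉ S.pos) : α ∈ S.neg :=
  (S.mem_neg_iff hα).2 <| (S.posFun_ne α hα).lt_of_le <| not_lt.1 fun hlt => h ⟨hα, hlt⟩

lemma neg_notMem_pos {α : V} (h : α ∈ S.pos) : -α ∉ S.pos :=
  S.notMem_neg_of_mem_pos h

lemma apply_mem_R_iff {g : V ≃ₗᵢ[ℝ] V} (hg : g ∈ S.W) (α : V) : g α ∈ S.R ↔ α ∈ S.R := by
  induction hg using Subgroup.closure_induction generalizing α with
  | mem _ hs =>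
    obtain ⟨ρ, hρ, rfl⟩ := hs
    exact ⟨fun h => rsRefl_rsRefl ρ α ▸ S.reflect_mem ρ hρ _ h, S.reflect_mem ρ hρ α⟩
  | one => rfl
  | mul x y _ _ hx hy => exact (hx _).trans (hy α)
  | inv x _ hx => rw [← hx, LinearIsometryEquiv.coe_inv, x.apply_symm_apply]

def inversions (x : V ≃ₗᵢ[ℝ] V) : Set V := {α | α ∈ S.R ∩ S.pos ∧ x α ∈ S.neg}

lemma lH_eq_ncard_inversions (x : V ≃ₗᵢ[ℝ] V) : S.lH S.R x = (S.inversions x).ncard := rfl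

lemma finite_inversions (x : V ≃ₗᵢ[ℝ] V) : (S.inversions x).Finite :=
  S.finR.subset fun _ h => h.1.1

lemma mapsTo_inversions_inv (x : V ≃ₗᵢ[ℝ] V) :
    MapsTo (fun δ => -x δ) (S.inversions x) (S.inversions x⁻¹) := by
  rintro δ ⟨⟨-, hδ⟩, hxδ⟩
  refine ⟨⟨S.pos_subset hxδ, hxδ⟩, ?_⟩
  rwa [map_neg, LinearIsometryEquiv.coe_inv, x.symm_apply_apply, S.neg_mem_neg_iff]

lemma lH_inv (x : V ≃ₗᵢ[ℝ] V) : S.lH S.R x⁻¹ = S.lH S.R x := by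
  have hle : ∀ y : V ≃ₗᵢ[ℝ] V, (S.inversions y).ncard ≤ (S.inversions y⁻¹).ncard := fun y =>
    ncard_le_ncard_of_injOn _ (S.mapsTo_inversions_inv y)
      (neg_injective.comp y.injective).injOn (S.finite_inversions y⁻¹)
  rw [lH_eq_ncard_inversions, lH_eq_ncard_inversions]
  exact le_antisymm (inv_inv x ▸ hle x⁻¹) (hle x)

lemma exists_pos_eq_rsRefl_add_smul {γ δ : V} (hγ : γ ∈ S.pos) (hδ : δ ∈ S.pos)
    (hsδ : S.posFun (rsRefl V γ δ) < 0) : ∃ c : ℝ, 0 < c ∧ δ = rsRefl V γ δ + c • γ := by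
  set c := 2 * (⟪γ, δ⟫ / ‖γ‖ ^ 2)
  have hs : rsRefl V γ δ = δ - c • γ := rsRefl_apply γ δ
  refine ⟨c, ?_, by rw [hs, sub_add_cancel]⟩
  rw [hs, map_sub, map_smul, smul_eq_mul] at hsδ
  exact pos_of_mul_pos_left (by linarith [hδ.2]) hγ.2.le

variable {S} {x : V ≃ₗᵢ[ℝ] V} {γ : V}

lemma mem_inversions_of_rsRefl_notMem_pos (hx : ∀ α ∈ S.R, x α ∈ S.R) (hγ : γ ∈ S.pos)
    (hxγ : x γ ∈ S.neg) {δ : V} (hδ : δ ∈ S.inversions (x * rsRefl V γ))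
    (hsδ : rsRefl V γ δ ∉ S.pos) : δ ∈ S.inversions x \ {γ} := by
  obtain ⟨⟨hδR, hδpos⟩, hxsδ⟩ := hδ
  have hsδR : rsRefl V γ δ ∈ S.R := S.reflect_mem γ hγ.1 δ hδR
  obtain ⟨c, hc, hδc⟩ := S.exists_pos_eq_rsRefl_add_smul hγ hδpos
    ((S.mem_neg_iff hsδR).1 (S.mem_neg_of_notMem_pos hsδR hsδ))
  have hxδ : x δ = x (rsRefl V γ δ) + c • x γ := by rw [← map_smul, ← map_add, ← hδc]
  refine ⟨⟨⟨hδR, hδpos⟩, (S.mem_neg_iff (hx δ hδR)).2 ?_⟩, ?_⟩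
  · rw [hxδ, map_add, map_smul, smul_eq_mul]
    have := (S.mem_neg_iff (hx _ hsδR)).1 hxsδ
    nlinarith [(S.mem_neg_iff (hx γ hγ.1)).1 hxγ]
  · rintro rfl
    rw [LinearIsometryEquiv.coe_mul, Function.comp_apply, rsRefl_apply_self, map_neg,
      S.neg_mem_neg_iff] at hxsδ
    exact S.notMem_neg_of_mem_pos hxsδ hxγ

lemma rsRefl_mem_inversions_of_mem_pos (hγ : γ ∈ S.pos) {δ : V}
    (hδ : δ ∈ S.inversions (x * rsRefl V γ)) (hsδ : rsRefl V γ δ ∈ S.pos) :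
    rsRefl V γ δ ∈ S.inversions x \ {γ} := by
  refine ⟨⟨⟨hsδ.1, hsδ⟩, hδ.2⟩, fun h => S.neg_notMem_pos hγ ?_⟩
  have hδγ := congrArg (rsRefl V γ) (mem_singleton_iff.1 h)
  rw [rsRefl_rsRefl, rsRefl_apply_self] at hδγ
  exact hδγ ▸ hδ.1.2

lemma lH_mul_rsRefl_lt (hx : ∀ α ∈ S.R, x α ∈ S.R) (hγ : γ ∈ S.pos) (hxγ : x γ ∈ S.neg) :
    S.lH S.R (x * rsRefl V γ) < S.lH S.R x := by
  classical
  let f : V → V := fun δ => if rsRefl V γ δ ∈ S.pos then rsRefl V γ δ else δ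
  have hf : MapsTo f (S.inversions (x * rsRefl V γ)) (S.inversions x \ {γ}) := by
    intro δ hδ
    by_cases hsδ : rsRefl V γ δ ∈ S.pos
    · simpa only [f, if_pos hsδ] using rsRefl_mem_inversions_of_mem_pos hγ hδ hsδ
    · simpa only [f, if_neg hsδ] using mem_inversions_of_rsRefl_notMem_pos hx hγ hxγ hδ hsδ
  have hf_inj : InjOn f (S.inversions (x * rsRefl V γ)) := by
    intro δ₁ hδ₁ δ₂ hδ₂ h
    by_cases h₁ : rsRefl V γ δ₁ ∈ S.pos <;> by_cases h₂ : rsRefl V γ δ₂ ∈ S.pos <;>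
      simp only [f, h₁, h₂, if_true, if_false] at h
    · exact (rsRefl V γ).injective h
    · rw [← h, rsRefl_rsRefl] at h₂
      exact absurd hδ₁.1.2 h₂
    · rw [h, rsRefl_rsRefl] at h₁
      exact absurd hδ₂.1.2 h₁
    · exact h
  have hfin := S.finite_inversions x
  rw [lH_eq_ncard_inversions, lH_eq_ncard_inversions]
  calc (S.inversions (x * rsRefl V γ)).ncard
      ≤ (S.inversions x \ {γ}).ncard := ncard_le_ncard_of_injOn f hf hf_inj hfin.sdiff
    _ < (S.inversions x).ncard := ncard_sdiff_singleton_lt_of_mem ⟨⟨hγ.1, hγ⟩, hxγ⟩ hfin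

lemma lH_rsRefl_mul_lt (hx : ∀ α ∈ S.R, x⁻¹ α ∈ S.R) (hγ : γ ∈ S.pos) (hxγ : x⁻¹ γ ∈ S.neg) :
    S.lH S.R (rsRefl V γ * x) < S.lH S.R x := by
  rw [← S.lH_inv, mul_inv_rev, rsRefl_inv, ← S.lH_inv x]
  exact lH_mul_rsRefl_lt hx hγ hxγ

lemma mem_DHJ_of_forall_not_lt {RH J : Set V} (hJ : J ⊆ S.pos) {d : V ≃ₗᵢ[ℝ] V} (hd : d ∈ S.W)
    (hright : ∀ α ∈ J, ¬ S.lH S.R (d * rsRefl V α) < S.lH S.R d)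
    (hleft : ∀ β ∈ S.simpleOf RH, ¬ S.lH S.R (rsRefl V β * d) < S.lH S.R d) :
    d ∈ S.DHJ RH J := by
  have hdR : ∀ α ∈ S.R, d α ∈ S.R := fun α => (S.apply_mem_R_iff hd α).2
  have hdR' : ∀ α ∈ S.R, d⁻¹ α ∈ S.R := fun α => (S.apply_mem_R_iff (inv_mem hd) α).2
  refine ⟨hd, fun α hα => ?_, fun β hβ => ?_⟩
  · have hαpos := hJ hα
    by_contra hdα
    exact hright α hα <| lH_mul_rsRefl_lt hdR hαpos <|
      S.mem_neg_of_notMem_pos (hdR α hαpos.1) hdα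
  · have hβpos : β ∈ S.pos := hβ.1.2
    by_contra hdβ
    exact hleft β hβ <| lH_rsRefl_mul_lt hdR' hβpos <|
      S.mem_neg_of_notMem_pos (hdR' β hβpos.1) hdβ

end RootSystemData

theorem statement1_general
    (V : Type*) [NormedAddCommGroup V] [InnerProductSpace ℝ V]
    (S : RootSystemData V) (RH : Set V)
    (hRHsub : RH ⊆ S.R)
    (J : Set V) (hJ : J ⊆ S.simple) :
    ∀ w ∈ S.W, ∃ d ∈ S.DHJ RH J,
      ∃ h ∈ weylGroupOf RH, ∃ u ∈ weylGroupOf J, d = h * w * u := by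
  intro w hw
  have hJpos : J ⊆ S.pos := fun α hα => (hJ hα).1.2
  let T := DoubleCoset.doubleCoset w (weylGroupOf RH : Set (V ≃ₗᵢ[ℝ] V)) (weylGroupOf J)
  have hTW : T ⊆ S.W := by
    intro d hd
    obtain ⟨h, hh, u, hu, rfl⟩ := DoubleCoset.mem_doubleCoset.1 hd
    exact mul_mem (mul_mem (weylGroupOf_mono hRHsub hh) hw)
      (weylGroupOf_mono (hJpos.trans S.pos_subset) hu)
  obtain ⟨d, hdT, hmin⟩ :=
    (measure (S.lH S.R)).wf.has_min T ⟨w, DoubleCoset.mem_doubleCoset_self _ _ w⟩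
  refine ⟨d, S.mem_DHJ_of_forall_not_lt hJpos (hTW hdT) (fun α hα => hmin _ ?_)
    (fun β hβ => hmin _ ?_), DoubleCoset.mem_doubleCoset.1 hdT⟩
  · exact DoubleCoset.mul_right_mem_doubleCoset hdT (rsRefl_mem_weylGroupOf hα)
  · exact DoubleCoset.mul_left_mem_doubleCoset hdT (rsRefl_mem_weylGroupOf hβ.1.1)

/-- every double coset `W_H·w·W_J` contains at least one element of `D_{H,J}`. -/
theorem statement1
    (V : Type*) [NormedAddCommGroup V] [InnerProductSpace ℝ V] [FiniteDimensional ℝ V]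
    (S : RootSystemData V) (RH : Set V)
    (hRHsub : RH ⊆ S.R) (hRHrefl : ∀ α ∈ RH, ∀ β ∈ RH, rsRefl V α β ∈ RH)
    (J : Set V) (hJ : J ⊆ S.simple) :
    ∀ w ∈ S.W, ∃ d ∈ S.DHJ RH J,
      ∃ h ∈ weylGroupOf RH, ∃ u ∈ weylGroupOf J, d = h * w * u :=
  statement1_general V S RH hRHsub J hJ
end
end

section
/- Let a_H ⊆ V be a linear subspace, let x ∈ W satisfy x(a_H) = a_H, and let w ∈ D_{H,J}. Then d_J(x,w) ∈ 𝐷̃_J if and only if w(a_J) ⊆ a_H (i.e. if and only if w ∈ 𝐷̃_{H,J}). -/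
noncomputable section

open scoped RealInnerProductSpace

variable (V : Type*) [NormedAddCommGroup V] [InnerProductSpace ℝ V] [FiniteDimensional ℝ V]

variable {V}

variable (V)

/-! `weylGroupOf J` is generated by reflections `s_α` with `α ∈ J`, each fixing `a_J` pointwise, so
`w_J(x,w)` fixes `a_J` pointwise. Hence `d_J(x,w)⁻¹ = x⁻¹ w w_J(x,w)` maps `a_J` onto `x⁻¹ w(a_J)`, and `x⁻¹`
preserves `a_H`. -/

section

variable {E : Type*} [NormedAddCommGroup E] [InnerProductSpace ℝ E]

theorem rsRefl_apply_of_inner_eq_zero {α v : E} (h : ⟪α, v⟫ = 0) : rsRefl E α v = v :=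
  Submodule.reflection_mem_subspace_eq_self (Submodule.mem_orthogonal_singleton_iff_inner_right.2 h)

theorem apply_eq_self_of_mem_weylGroupOf {J : Set E} {g : E ≃ₗᵢ[ℝ] E} (hg : g ∈ weylGroupOf J)
    {v : E} (hv : v ∈ aJset J) : g v = v := by
  induction hg using Subgroup.closure_induction with
  | mem g hg =>
    obtain ⟨α, hα, rfl⟩ := hg
    exact rsRefl_apply_of_inner_eq_zero (hv α hα)
  | one => rfl
  | mul g h _ _ hg hh => exact (congrArg g hh).trans hg
  | inv g _ hg => exact g.symm_apply_eq.2 hg.symm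

theorem image_aJset_of_mem_weylGroupOf {J : Set E} {g : E ≃ₗᵢ[ℝ] E} (hg : g ∈ weylGroupOf J) :
    ⇑g '' aJset J = aJset J := by
  rw [Set.image_congr fun v hv => apply_eq_self_of_mem_weylGroupOf hg hv, Set.image_id']

theorem LinearIsometryEquiv.inv_image_subset_iff_of_image_eq {x : E ≃ₗᵢ[ℝ] E} {A B : Set E}
    (hA : ⇑x '' A = A) : ⇑x⁻¹ '' B ⊆ A ↔ B ⊆ A := by
  rw [Set.image_subset_iff, coe_inv, ← image_eq_preimage_symm, hA]

end

theorem statement7_general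
    (V : Type*) [NormedAddCommGroup V] [InnerProductSpace ℝ V]
    (S : RootSystemData V)
    (J : Set V) (aH : Submodule ℝ V)
    (x w : V ≃ₗᵢ[ℝ] V) (hxa : ⇑x '' (aH : Set V) = (aH : Set V))
    (wJ dJ : V ≃ₗᵢ[ℝ] V) (hwJ : wJ ∈ weylGroupOf J) (hdJ : dJ ∈ S.DJ J)
    (hdec : w⁻¹ * x = wJ * dJ) :
    (dJ ∈ S.DJ J ∧ ⇑dJ⁻¹ '' aJset J ⊆ (aH : Set V)) ↔ ⇑w '' aJset J ⊆ (aH : Set V) := by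
  have hdJ_inv : dJ⁻¹ = x⁻¹ * w * wJ := by
    rw [eq_inv_mul_of_mul_eq hdec.symm]; group
  have himage : ⇑dJ⁻¹ '' aJset J = ⇑x⁻¹ '' (⇑w '' aJset J) := by
    rw [hdJ_inv, LinearIsometryEquiv.coe_mul, LinearIsometryEquiv.coe_mul, Set.image_comp,
      Set.image_comp, image_aJset_of_mem_weylGroupOf hwJ]
  rw [himage, LinearIsometryEquiv.inv_image_subset_iff_of_image_eq hxa, and_iff_right hdJ]

/-- for `x ∈ W` with `x(a_H) = a_H` and `w ∈ D_{H,J}`,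
`d_J(x,w) ∈ 𝐷̃_J` iff `w(a_J) ⊆ a_H`. -/
theorem statement7
    (V : Type*) [NormedAddCommGroup V] [InnerProductSpace ℝ V] [FiniteDimensional ℝ V]
    (S : RootSystemData V) (RH : Set V)
    (hRHsub : RH ⊆ S.R) (hRHrefl : ∀ α ∈ RH, ∀ β ∈ RH, rsRefl V α β ∈ RH)
    (J : Set V) (hJ : J ⊆ S.simple) (aH : Submodule ℝ V)
    (x w : V ≃ₗᵢ[ℝ] V) (hx : x ∈ S.W) (hxa : ⇑x '' (aH : Set V) = (aH : Set V))
    (hw : w ∈ S.DHJ RH J)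
    (wJ dJ : V ≃ₗᵢ[ℝ] V) (hwJ : wJ ∈ weylGroupOf J) (hdJ : dJ ∈ S.DJ J)
    (hdec : w⁻¹ * x = wJ * dJ) :
    (dJ ∈ S.DJ J ∧ ⇑dJ⁻¹ '' aJset J ⊆ (aH : Set V)) ↔ ⇑w '' aJset J ⊆ (aH : Set V) :=
  statement7_general V S J aH x w hxa wJ dJ hwJ hdJ hdec
end
end

section
/- Let ψ and ψ′ be parameter data on the same index set I, with the same assignment of ρ's and ζ's, the same order >ψ (each satisfying condition (P)), and with identical blocks except at one index k, where ζ_k = −1, a_k(ψ) = a_k(ψ′), b_k(ψ′) ≥ a_k(ψ′), and b_k(ψ) = b_k(ψ′) + 2T for some integer T ≥ 0. Then Z_{MW/W}(ψ) = Z_{MW/W}(ψ′). -/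
noncomputable section

/-- A parameter datum: a finite family of Jordan blocks `(ρ_i, a_i, b_i)` with signs
`ζ_i ∈ {±1}` (equal to the sign of `a_i − b_i` when `a_i ≠ b_i`), together with a strict
linear order `>ψ` on the index set satisfying condition (P). Recall the invariants
`A_i = (a_i + b_i)/2 − 1` and `B_i = |a_i − b_i|/2`, so that `A_i > A_j ↔ a_i + b_i > a_j + b_j`
and `B_i > B_j ↔ |a_i − b_i| > |a_j − b_j|`. -/
structure ParamDatum (ρT : Type*) (I : Type*) where
  ρ : I → ρT
  a : I → ℕ
  b : I → ℕ
  ζ : I → ℤ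
  a_pos : ∀ i, 0 < a i
  b_pos : ∀ i, 0 < b i
  ζ_pm : ∀ i, ζ i = 1 ∨ ζ i = -1
  ζ_sign_pos : ∀ i, b i < a i → ζ i = 1
  ζ_sign_neg : ∀ i, a i < b i → ζ i = -1
  gt : I → I → Prop
  gt_irrefl : ∀ i, ¬ gt i i
  gt_trans : ∀ i j k, gt i j → gt j k → gt i k
  gt_total : ∀ i j, gt i j ∨ i = j ∨ gt j i
  condP : ∀ i j, ρ i = ρ j → ζ i = ζ j → a j + b j < a i + b i →
    |(a j : ℤ) - (b j : ℤ)| < |(a i : ℤ) - (b i : ℤ)| → gt i j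

namespace ParamDatum

variable {ρT I : Type*} (ψ : ParamDatum ρT I)

/-- The asymmetric condition defining membership of the pair `{i, j}` in `Z_{MW/W}(ψ)`,
with `i` playing the role of `(ρ, a, b, ζ)` and `j` of `(ρ′, a′, b′, ζ′)`. -/
def pairCond (i j : I) : Prop :=
  ψ.ρ i = ψ.ρ j ∧
  ((Even (ψ.a i) ∧ Even (ψ.b i) ∧ Odd (ψ.a j) ∧ Odd (ψ.b j) ∧
      ((ψ.ζ i = -1 ∧ ((ψ.ζ j = -1 ∧ ψ.gt i j ∧ ψ.a j < ψ.a i) ∨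
          (ψ.ζ j = 1 ∧ ψ.a j < ψ.a i))) ∨
       (ψ.ζ i = 1 ∧ ψ.ζ j = 1 ∧
          ((ψ.gt i j ∧ ψ.a i < ψ.a j ∧ ψ.b j < ψ.b i) ∨
           (ψ.gt j i ∧ ψ.a j < ψ.a i ∧ ψ.b j < ψ.b i))))) ∨
   (Odd (ψ.a i) ∧ Even (ψ.b i) ∧ Even (ψ.a j) ∧ Odd (ψ.b j) ∧
      ((ψ.ζ i = -1 ∧ ((ψ.ζ j = -1 ∧ ψ.gt i j ∧ ψ.a i < ψ.a j) ∨
          (ψ.ζ j = 1 ∧ ψ.gt i j ∧ ψ.a i < ψ.a j) ∨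
          (ψ.ζ j = 1 ∧ ψ.gt j i ∧ ψ.a j < ψ.a i))) ∨
       (ψ.ζ i = 1 ∧ ψ.ζ j = 1 ∧
          ((ψ.gt i j ∧ ψ.a i < ψ.a j ∧ ψ.b j < ψ.b i) ∨
           (ψ.gt j i ∧ ψ.a j < ψ.a i ∧ ψ.b j < ψ.b i))))))

/-- The symmetric relation: the unordered pair `{i, j}` belongs to `Z_{MW/W}(ψ)`. -/
def ZRel (i j : I) : Prop := ψ.pairCond i j ∨ ψ.pairCond j i

/-- The set `Z_{MW/W}(ψ)` of unordered pairs. -/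
def Zmww : Set (Sym2 I) := {p | ∃ i j, p = s(i, j) ∧ ψ.ZRel i j}

/-- `deg_ψ(i) := #{j : {i,j} ∈ Z_{MW/W}(ψ)}`. -/
def degZ (i : I) : ℕ := Set.ncard {j | ψ.ZRel i j}

end ParamDatum

/-
Block `k` has `ζ_k = −1`, and in the definition of `Z_{MW/W}` the entry `b` of a block with
`ζ = −1` enters only through its parity: the comparisons of `b` with `b′` occur only in the
cases `ζ = ζ′ = +1`. Adding `2T` to `b_k` keeps its parity, so every defining condition, and
hence `Z_{MW/W}`, is unchanged.
-/

namespace ParamDatum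

variable {ρT I : Type*} {ψ ψ' : ParamDatum ρT I}

theorem pairCond_iff_of_agree (hρ : ∀ i, ψ.ρ i = ψ'.ρ i) (hζ : ∀ i, ψ.ζ i = ψ'.ζ i)
    (hgt : ∀ i j, ψ.gt i j ↔ ψ'.gt i j) (ha : ∀ i, ψ.a i = ψ'.a i)
    (hb_even : ∀ i, Even (ψ.b i) ↔ Even (ψ'.b i))
    (hb : ∀ i, ψ.ζ i = 1 → ψ.b i = ψ'.b i)
    (i j : I) : ψ.pairCond i j ↔ ψ'.pairCond i j := by
  have hb_odd : ∀ i, Odd (ψ.b i) ↔ Odd (ψ'.b i) := fun i => by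
    rw [← Nat.not_even_iff_odd, ← Nat.not_even_iff_odd, hb_even i]
  unfold pairCond
  by_cases hζij : ψ.ζ i = 1 ∧ ψ.ζ j = 1
  · rw [hb i hζij.1, hb j hζij.2]
    simp only [hρ, hζ, hgt, ha]
  · simp only [hρ, hζ, hgt, ha, hb_even, hb_odd]
    rw [hζ, hζ] at hζij
    rcases ψ'.ζ_pm i with hi | hi <;> rcases ψ'.ζ_pm j with hj | hj <;>
      simp [hi, hj] at hζij ⊢

theorem zmww_eq_of_agree (hρ : ∀ i, ψ.ρ i = ψ'.ρ i) (hζ : ∀ i, ψ.ζ i = ψ'.ζ i)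
    (hgt : ∀ i j, ψ.gt i j ↔ ψ'.gt i j) (ha : ∀ i, ψ.a i = ψ'.a i)
    (hb_even : ∀ i, Even (ψ.b i) ↔ Even (ψ'.b i))
    (hb : ∀ i, ψ.ζ i = 1 → ψ.b i = ψ'.b i) :
    ψ.Zmww = ψ'.Zmww := by
  have hpair := pairCond_iff_of_agree hρ hζ hgt ha hb_even hb
  have hrel : ∀ i j, ψ.ZRel i j ↔ ψ'.ZRel i j := fun i j => by
    rw [ZRel, ZRel, hpair i j, hpair j i]
  ext p
  simp only [Zmww, Set.mem_ofPred_eq, hrel]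

end ParamDatum

theorem statement14_general (ρT I : Type*) (ψ ψ' : ParamDatum ρT I) (k : I) (T : ℕ)
    (hρ : ∀ i, ψ.ρ i = ψ'.ρ i) (hζ : ∀ i, ψ.ζ i = ψ'.ζ i)
    (hgt : ∀ i j, ψ.gt i j ↔ ψ'.gt i j)
    (hab : ∀ i, i ≠ k → ψ.a i = ψ'.a i ∧ ψ.b i = ψ'.b i)
    (hζk : ψ.ζ k = -1) (hak : ψ.a k = ψ'.a k)
    (hbk : ψ.b k = ψ'.b k + 2 * T) :
    ψ.Zmww = ψ'.Zmww := by
  refine ParamDatum.zmww_eq_of_agree hρ hζ hgt (fun i => ?_) (fun i => ?_) (fun i hi => ?_)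
  · rcases eq_or_ne i k with rfl | hik
    · exact hak
    · exact (hab i hik).1
  · rcases eq_or_ne i k with rfl | hik
    · simp [hbk, Nat.even_add]
    · rw [(hab i hik).2]
  · have hik : i ≠ k := by rintro rfl; simp [hζk] at hi
    exact (hab i hik).2

/-- shrinking `b_k` by `2T` at a single index `k` with `ζ_k = −1`,
`a_k` unchanged, and `b_k′ ≥ a_k′`, does not change `Z_{MW/W}`. -/
theorem statement14 (ρT I : Type*) [Fintype I] (ψ ψ' : ParamDatum ρT I) (k : I) (T : ℕ)
    (hρ : ∀ i, ψ.ρ i = ψ'.ρ i) (hζ : ∀ i, ψ.ζ i = ψ'.ζ i)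
    (hgt : ∀ i j, ψ.gt i j ↔ ψ'.gt i j)
    (hab : ∀ i, i ≠ k → ψ.a i = ψ'.a i ∧ ψ.b i = ψ'.b i)
    (hζk : ψ.ζ k = -1) (hak : ψ.a k = ψ'.a k)
    (hko : ψ'.a k ≤ ψ'.b k) (hbk : ψ.b k = ψ'.b k + 2 * T) :
    ψ.Zmww = ψ'.Zmww :=
  statement14_general ρT I ψ ψ' k T hρ hζ hgt hab hζk hak hbk
end
end

section
/- Let ψ and ψ′ be parameter data on the same index set I, with the same assignment of ρ's and ζ's, the same order >ψ (each satisfying condition (P)), and with identical blocks except at one index k, where ζ_k = +1, b_k(ψ) = b_k(ψ′), a_k(ψ′) ≥ b_k(ψ′), and a_k(ψ) = a_k(ψ′) + 2T for some integer T ≥ 0. Define Z(ψ) as the set of unordered pairs {i,j} ⊆ I with ρ_i = ρ_j such that max(a_i,a_j) and max(b_i,b_j) are even while min(a_i,a_j) and min(b_i,b_j) are odd. Then |Z_{MW/W}(ψ)| + |Z_{MW/W}(ψ′)| ≡ |Z(ψ)| + |Z(ψ′)| (mod 2). -/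
noncomputable section

/-- The set `Z(ψ)`: unordered pairs `{i,j}` with `ρ_i = ρ_j` such that `max(a_i,a_j)` and
`max(b_i,b_j)` are even while `min(a_i,a_j)` and `min(b_i,b_j)` are odd. -/
def ParamDatum.Zplain {ρT I : Type*} (ψ : ParamDatum ρT I) : Set (Sym2 I) :=
  {p | ∃ i j, p = s(i, j) ∧ ψ.ρ i = ψ.ρ j ∧
    Even (max (ψ.a i) (ψ.a j)) ∧ Even (max (ψ.b i) (ψ.b j)) ∧
    Odd (min (ψ.a i) (ψ.a j)) ∧ Odd (min (ψ.b i) (ψ.b j))}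

/-! Only pairs `{k, j}` can change, and since `|X| + |Y| ≡ |X ∆ Y| (mod 2)` it suffices to show
`Z_{MW/W}(ψ) ∆ Z_{MW/W}(ψ′) = Z(ψ) ∆ Z(ψ′)`: the pair `{k, j}` changes its membership in
`Z_{MW/W}` exactly when it changes its membership in `Z`. -/

theorem Set.ncard_add_ncard_modEq_ncard_symmDiff {α : Type*} {s t : Set α}
    (hs : s.Finite) (ht : t.Finite) : s.ncard + t.ncard ≡ (symmDiff s t).ncard [MOD 2] := by
  have hunion := Set.ncard_union_add_ncard_inter s t hs ht
  have hdiff := Set.ncard_sdiff_add_ncard_of_subset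
    (Set.inter_subset_left.trans Set.subset_union_left : s ∩ t ⊆ s ∪ t) (hs.union ht)
  have hsymmDiff : symmDiff s t = (s ∪ t) \ (s ∩ t) := symmDiff_eq_sup_sdiff_inf s t
  rw [hsymmDiff]
  unfold Nat.ModEq
  omega

theorem Nat.even_max_and_odd_min_iff (m n : ℕ) :
    Even (max m n) ∧ Odd (min m n) ↔ m < n ∧ Odd m ∧ Even n ∨ n < m ∧ Even m ∧ Odd n := by
  rcases lt_trichotomy m n with h | rfl | h
  · simp [max_eq_right h.le, min_eq_left h.le, h, h.not_gt, and_comm]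
  · simp
  · simp [max_eq_left h.le, min_eq_right h.le, h, h.not_gt]

namespace ParamDatum

variable {ρT I : Type*}

theorem gt_iff_not_gt_of_ne (ψ : ParamDatum ρT I) {i j : I} (h : i ≠ j) :
    ψ.gt j i ↔ ¬ ψ.gt i j := by
  rcases ψ.gt_total i j with hij | rfl | hji
  · exact iff_of_false (fun hji => ψ.gt_irrefl i (ψ.gt_trans _ _ _ hij hji)) (not_not.2 hij)
  · exact absurd rfl h
  · exact iff_of_true hji (fun hij => ψ.gt_irrefl i (ψ.gt_trans _ _ _ hij hji))

theorem ζ_cases (ψ : ParamDatum ρT I) (i : I) :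
    ψ.ζ i = 1 ∧ ψ.b i ≤ ψ.a i ∨ ψ.ζ i = -1 ∧ ψ.a i ≤ ψ.b i := by
  have := ψ.ζ_sign_pos i
  have := ψ.ζ_sign_neg i
  rcases ψ.ζ_pm i with h | h <;> [left; right] <;> exact ⟨h, by omega⟩

theorem zRel_comm (ψ : ParamDatum ρT I) (i j : I) : ψ.ZRel i j ↔ ψ.ZRel j i :=
  or_comm

theorem zRel_irrefl (ψ : ParamDatum ρT I) (i : I) : ¬ ψ.ZRel i i := by
  rw [ZRel, or_self]
  rintro ⟨-, ⟨he, -, ho, -⟩ | ⟨ho, -, he, -⟩⟩ <;> exact Nat.not_even_iff_odd.2 ho he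

theorem mem_Zmww (ψ : ParamDatum ρT I) (i j : I) : s(i, j) ∈ ψ.Zmww ↔ ψ.ZRel i j := by
  refine ⟨?_, fun h => ⟨i, j, rfl, h⟩⟩
  rintro ⟨i', j', hp, h⟩
  rcases Sym2.eq_iff.1 hp with ⟨rfl, rfl⟩ | ⟨rfl, rfl⟩
  exacts [h, (ψ.zRel_comm _ _).1 h]

def plainRel (ψ : ParamDatum ρT I) (i j : I) : Prop :=
  ψ.ρ i = ψ.ρ j ∧
    (ψ.a i < ψ.a j ∧ Odd (ψ.a i) ∧ Even (ψ.a j) ∨ ψ.a j < ψ.a i ∧ Even (ψ.a i) ∧ Odd (ψ.a j)) ∧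
    (ψ.b i < ψ.b j ∧ Odd (ψ.b i) ∧ Even (ψ.b j) ∨ ψ.b j < ψ.b i ∧ Even (ψ.b i) ∧ Odd (ψ.b j))

theorem plainRel_comm (ψ : ParamDatum ρT I) (i j : I) : ψ.plainRel i j ↔ ψ.plainRel j i := by
  unfold plainRel
  rw [eq_comm]
  tauto

theorem plainRel_irrefl (ψ : ParamDatum ρT I) (i : I) : ¬ ψ.plainRel i i := by
  simp [plainRel]

theorem mem_Zplain (ψ : ParamDatum ρT I) (i j : I) : s(i, j) ∈ ψ.Zplain ↔ ψ.plainRel i j := by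
  have hrel : ∀ i j, ψ.plainRel i j ↔ ψ.ρ i = ψ.ρ j ∧
      Even (max (ψ.a i) (ψ.a j)) ∧ Even (max (ψ.b i) (ψ.b j)) ∧
      Odd (min (ψ.a i) (ψ.a j)) ∧ Odd (min (ψ.b i) (ψ.b j)) := by
    intro i j
    rw [plainRel, ← Nat.even_max_and_odd_min_iff, ← Nat.even_max_and_odd_min_iff]
    tauto
  rw [hrel]
  refine ⟨?_, fun h => ⟨i, j, rfl, h⟩⟩
  rintro ⟨i', j', hp, h⟩
  rcases Sym2.eq_iff.1 hp with ⟨rfl, rfl⟩ | ⟨rfl, rfl⟩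
  exacts [h, (hrel _ _).1 ((ψ.plainRel_comm _ _).1 ((hrel _ _).2 h))]

section SameShape

variable {ψ ψ' : ParamDatum ρT I}

theorem zRel_iff_of_eq (hρ : ∀ i, ψ.ρ i = ψ'.ρ i) (hζ : ∀ i, ψ.ζ i = ψ'.ζ i)
    (hgt : ∀ i j, ψ.gt i j ↔ ψ'.gt i j) {x y : I} (hx : ψ.a x = ψ'.a x ∧ ψ.b x = ψ'.b x)
    (hy : ψ.a y = ψ'.a y ∧ ψ.b y = ψ'.b y) : ψ.ZRel x y ↔ ψ'.ZRel x y := by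
  simp only [ZRel, pairCond, hρ, hζ, hgt, hx.1, hx.2, hy.1, hy.2]

theorem plainRel_iff_of_eq (hρ : ∀ i, ψ.ρ i = ψ'.ρ i) {x y : I}
    (hx : ψ.a x = ψ'.a x ∧ ψ.b x = ψ'.b x) (hy : ψ.a y = ψ'.a y ∧ ψ.b y = ψ'.b y) :
    ψ.plainRel x y ↔ ψ'.plainRel x y := by
  simp only [plainRel, hρ, hx.1, hx.2, hy.1, hy.2]

/-- Both relations need `a_k ≢ a_j` and `b_k ≢ b_j (mod 2)`, so moving `a_k` within its parity
class only matters through the comparison of `a_k` with `a_j`. In each configuration either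
flipping that comparison toggles `Z_{MW/W}` and `Z` together, or the comparison is forced by
`b_k ≤ a_k` and (when `ζ_j = -1`) `a_j ≤ b_j`. -/
theorem xor_zRel_iff_xor_plainRel_of_modEq_a (hρ : ∀ i, ψ.ρ i = ψ'.ρ i)
    (hζ : ∀ i, ψ.ζ i = ψ'.ζ i) (hgt : ∀ i j, ψ.gt i j ↔ ψ'.gt i j) {k j : I} (hjk : j ≠ k)
    (haj : ψ.a j = ψ'.a j) (hbj : ψ.b j = ψ'.b j) (hbk : ψ.b k = ψ'.b k) (hζk : ψ.ζ k = 1)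
    (hk : ψ.b k ≤ ψ.a k) (hk' : ψ'.b k ≤ ψ'.a k) (hpar : ψ.a k ≡ ψ'.a k [MOD 2]) :
    Xor (ψ.ZRel k j) (ψ'.ZRel k j) ↔ Xor (ψ.plainRel k j) (ψ'.plainRel k j) := by
  have hpar : ψ.a k % 2 = ψ'.a k % 2 := hpar
  have hord := ψ.gt_iff_not_gt_of_ne hjk.symm
  unfold ZRel pairCond plainRel Xor
  simp only [← hρ, ← hζ, ← hgt, ← haj, ← hbj, ← hbk, hord, hζk, Nat.even_iff, Nat.odd_iff]
  by_cases hρkj : ψ.ρ k = ψ.ρ j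
  · rcases Nat.mod_two_eq_zero_or_one (ψ.a k) with h1 | h1 <;>
    rcases Nat.mod_two_eq_zero_or_one (ψ.b k) with h2 | h2 <;>
    rcases Nat.mod_two_eq_zero_or_one (ψ.a j) with h3 | h3 <;>
    rcases Nat.mod_two_eq_zero_or_one (ψ.b j) with h4 | h4 <;>
    rcases ψ.ζ_cases j with ⟨hζj, hj⟩ | ⟨hζj, hj⟩ <;>
    by_cases hg : ψ.gt k j <;>
    simp only [← hpar, hρkj, hg, hζj, h1, h2, h3, h4, zero_ne_one, one_ne_zero, Int.reduceNeg,
      reduceCtorEq, true_and, and_true, false_and, and_false, and_self, or_false, false_or, or_self,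
      not_true_eq_false, not_false_eq_true, false_iff, not_and, not_or, not_le, not_lt, and_imp,
      Classical.not_imp] <;> omega
  · simp [hρkj, Ne.symm hρkj]

theorem symmDiff_Zmww_eq_symmDiff_Zplain (hρ : ∀ i, ψ.ρ i = ψ'.ρ i)
    (hζ : ∀ i, ψ.ζ i = ψ'.ζ i) (hgt : ∀ i j, ψ.gt i j ↔ ψ'.gt i j) {k : I}
    (hab : ∀ i, i ≠ k → ψ.a i = ψ'.a i ∧ ψ.b i = ψ'.b i)
    (hpair : ∀ j, j ≠ k →
      (Xor (ψ.ZRel k j) (ψ'.ZRel k j) ↔ Xor (ψ.plainRel k j) (ψ'.plainRel k j))) :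
    symmDiff ψ.Zmww ψ'.Zmww = symmDiff ψ.Zplain ψ'.Zplain := by
  ext p
  refine Sym2.ind (fun x y => ?_) p
  simp only [Set.mem_symmDiff, mem_Zmww, mem_Zplain]
  change Xor _ _ ↔ Xor _ _
  rcases eq_or_ne x k with rfl | hx
  · rcases eq_or_ne y x with rfl | hy
    · simp only [zRel_irrefl, plainRel_irrefl, _root_.xor_self]
    · exact hpair y hy
  · rcases eq_or_ne y k with rfl | hy
    · rw [zRel_comm ψ, zRel_comm ψ', plainRel_comm ψ, plainRel_comm ψ']
      exact hpair x hx
    · rw [zRel_iff_of_eq hρ hζ hgt (hab x hx) (hab y hy),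
        plainRel_iff_of_eq hρ (hab x hx) (hab y hy), _root_.xor_self, _root_.xor_self]

end SameShape

end ParamDatum

open ParamDatum in
/-- shrinking `a_k` by `2T` at a single index `k` with `ζ_k = +1`,
`b_k` unchanged, and `a_k′ ≥ b_k′`, changes `|Z_{MW/W}|` by the same parity as `|Z|`. -/
theorem statement15 (ρT I : Type*) [Fintype I] (ψ ψ' : ParamDatum ρT I) (k : I) (T : ℕ)
    (hρ : ∀ i, ψ.ρ i = ψ'.ρ i) (hζ : ∀ i, ψ.ζ i = ψ'.ζ i)
    (hgt : ∀ i j, ψ.gt i j ↔ ψ'.gt i j)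
    (hab : ∀ i, i ≠ k → ψ.a i = ψ'.a i ∧ ψ.b i = ψ'.b i)
    (hζk : ψ.ζ k = 1) (hbk : ψ.b k = ψ'.b k)
    (hko : ψ'.b k ≤ ψ'.a k) (hak : ψ.a k = ψ'.a k + 2 * T) :
    ψ.Zmww.ncard + ψ'.Zmww.ncard ≡ ψ.Zplain.ncard + ψ'.Zplain.ncard [MOD 2] := by
  have hsymmDiff : symmDiff ψ.Zmww ψ'.Zmww = symmDiff ψ.Zplain ψ'.Zplain :=
    symmDiff_Zmww_eq_symmDiff_Zplain hρ hζ hgt hab fun j hj =>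
      xor_zRel_iff_xor_plainRel_of_modEq_a hρ hζ hgt hj (hab j hj).1 (hab j hj).2 hbk hζk
        (by omega) hko (by simp [Nat.ModEq, hak])
  calc ψ.Zmww.ncard + ψ'.Zmww.ncard
      ≡ (symmDiff ψ.Zmww ψ'.Zmww).ncard [MOD 2] :=
        Set.ncard_add_ncard_modEq_ncard_symmDiff (Set.toFinite _) (Set.toFinite _)
    _ = (symmDiff ψ.Zplain ψ'.Zplain).ncard := by rw [hsymmDiff]
    _ ≡ ψ.Zplain.ncard + ψ'.Zplain.ncard [MOD 2] :=
        (Set.ncard_add_ncard_modEq_ncard_symmDiff (Set.toFinite _) (Set.toFinite _)).symm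
end
end

section
/- Fix a block k = (ρ, a, b) of ψ with ζ_k = ζ and A_k > B_k (i.e. min(a,b) > 1). Let ψ¹ be obtained from ψ by replacing block k with (ρ, a+2ζ, b−2ζ) (invariants (A_k, B_k+2, ζ)), and let ψ² be obtained from ψ by replacing block k with the two blocks (ρ, a+ζ, b−ζ) (invariants (A_k, B_k+1, ζ)) and the block with invariants (B_k, B_k, ζ), namely (ρ, |a−b|+1, 1) if ζ = +1 and (ρ, 1, |a−b|+1) if ζ = −1. Then for every block x ≠ k of ψ (which is also a block of ψ¹ and of ψ²): ε^{M/MW}_ψ(x) = ε^{M/MW}_{ψ²}(x), and, provided A_k ≥ B_k + 2, also ε^{M/MW}_ψ(x) = ε^{M/MW}_{ψ¹}(x). -/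
open scoped Classical

noncomputable section

/-- A finite collection of Jordan blocks `(ρ_i, a_i, b_i)` with signs `ζ_i ∈ {±1}` (equal
to the sign of `a_i − b_i` when `a_i ≠ b_i`). Recall `A_i = (a_i + b_i)/2 − 1` and
`B_i = |a_i − b_i|/2`. -/
structure BlockColl (ρT : Type*) (I : Type*) where
  ρ : I → ρT
  a : I → ℕ
  b : I → ℕ
  ζ : I → ℤ
  a_pos : ∀ i, 0 < a i
  b_pos : ∀ i, 0 < b i
  ζ_pm : ∀ i, ζ i = 1 ∨ ζ i = -1
  ζ_sign_pos : ∀ i, b i < a i → ζ i = 1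
  ζ_sign_neg : ∀ i, a i < b i → ζ i = -1

namespace BlockColl

variable {ρT I : Type*} (ψ : BlockColl ρT I)

/-- Discrete diagonal restriction: for each fixed `ρ`, the intervals `[B_i, A_i]` of the
blocks with `ρ_i = ρ` are pairwise disjoint (`A_i < B_j` or `A_j < B_i`, written with
`2A_i = a_i + b_i − 2` and `2B_i = |a_i − b_i|`). -/
def ddr : Prop := ∀ i j, i ≠ j → ψ.ρ i = ψ.ρ j →
  ((ψ.a i : ℤ) + ψ.b i - 2 < |(ψ.a j : ℤ) - ψ.b j| ∨
    (ψ.a j : ℤ) + ψ.b j - 2 < |(ψ.a i : ℤ) - ψ.b i|)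

/-- `m(x) := #{y : ρ_y = ρ_x, a_y, b_y odd, ζ_y = −1, |a_y − b_y| > |a_x − b_x|}`. -/
def mCount (i : I) : ℕ :=
  Set.ncard {j | ψ.ρ j = ψ.ρ i ∧ Odd (ψ.a j) ∧ Odd (ψ.b j) ∧ ψ.ζ j = -1 ∧
    |(ψ.a i : ℤ) - ψ.b i| < |(ψ.a j : ℤ) - ψ.b j|}

/-- `n(x) := #{y : ρ_y = ρ_x, a_y, b_y odd, |a_y − b_y| < |a_x − b_x|}`. -/
def nCount (i : I) : ℕ :=
  Set.ncard {j | ψ.ρ j = ψ.ρ i ∧ Odd (ψ.a j) ∧ Odd (ψ.b j) ∧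
    |(ψ.a j : ℤ) - ψ.b j| < |(ψ.a i : ℤ) - ψ.b i|}

/-- The sign `ε^{M/MW}_ψ(x)`. -/
def epsMMW (i : I) : ℤ :=
  if Odd (ψ.a i) ∧ Odd (ψ.b i) then
    (if ψ.ζ i = 1 then (-1) ^ ψ.mCount i else (-1) ^ (ψ.mCount i + ψ.nCount i))
  else 1

end BlockColl

/-!
Under discrete diagonal restriction, a block `x ≠ k` with the same `ρ` has its interval
`[B_x, A_x]` entirely below `B_k` or entirely above `A_k`, so `x` compares with every block whose
`B` lies in `[B_k, A_k]` exactly as it compares with `k`. The blocks replacing `k` in `ψ¹` and `ψ²`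
have the same `ρ` and `ζ` as `k` and their `B` in `[B_k, A_k]`; hence `m(x)` and `n(x)` can only
change through the number of them with both entries odd, and modulo 2 this number equals
`[a, b both odd]`: `(a ± 2, b ∓ 2)` has the parities of `(a, b)`, and among `(a + ζ, b − ζ)` and
`(2B_k + 1, 1)` (or its transpose) the count is 1, 2 or 0 according as `a, b` are both odd, both
even, or of mixed parity.
-/

theorem Set.ncard_sdiff_singleton_add_ite {α : Type*} {s : Set α} (hs : s.Finite) (a : α) :
    (s \ {a}).ncard + (if a ∈ s then 1 else 0) = s.ncard := by
  split_ifs with h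
  · exact Set.ncard_sdiff_singleton_add_one h hs
  · rw [Set.sdiff_singleton_eq_self h, add_zero]

theorem Set.ncard_preimage_some_add_ite {α : Type*} {s : Set (Option α)} (hs : s.Finite) :
    (some ⁻¹' s).ncard + (if none ∈ s then 1 else 0) = s.ncard := by
  rw [← Set.ncard_sdiff_singleton_add_ite hs none,
    ← Set.ncard_image_of_injective _ (Option.some_injective α)]
  congr 2
  ext (_ | i) <;> simp

theorem Set.ncard_option_modEq_of_xor {α : Type*} [Finite α] {s : Set α} {t : Set (Option α)} {k : α}
    (hne : ∀ i ≠ k, some i ∈ t ↔ i ∈ s) (hk : k ∈ s ↔ Xor (some k ∈ t) (none ∈ t)) :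
    t.ncard ≡ s.ncard [MOD 2] := by
  have hsk : (some ⁻¹' t) \ {k} = s \ {k} := by
    ext i
    simp only [Set.mem_sdiff, Set.mem_preimage, Set.mem_singleton_iff]
    exact and_congr_left (hne i)
  rw [← Set.ncard_preimage_some_add_ite t.toFinite,
    ← Set.ncard_sdiff_singleton_add_ite (some ⁻¹' t).toFinite k, hsk,
    ← Set.ncard_sdiff_singleton_add_ite s.toFinite k, Set.mem_preimage]
  unfold Nat.ModEq Xor at *
  split_ifs <;> first | omega | tauto

theorem Int.odd_and_odd_iff_xor {a b z : ℤ} (hz : Odd z) :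
    Odd a ∧ Odd b ↔ Xor (Odd (a + z) ∧ Odd (b - z)) (Even |a - b|) := by
  rw [even_abs]
  simp only [Int.odd_iff, Int.even_iff, Xor] at *
  omega

namespace BlockColl

variable {ρT I J : Type*}

-- `2A_i` and `2B_i`: doubling keeps the invariants integral.
def twiceA (ψ : BlockColl ρT I) (i : I) : ℤ := ψ.a i + ψ.b i - 2

def twiceB (ψ : BlockColl ρT I) (i : I) : ℤ := |(ψ.a i : ℤ) - ψ.b i|

def OddOdd (ψ : BlockColl ρT I) (i : I) : Prop := Odd (ψ.a i) ∧ Odd (ψ.b i)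

def oddCount (ψ : BlockColl ρT I) (r : ρT) (R : ℤ → ℤ → Prop) : ℕ :=
  {j | ψ.OddOdd j ∧ ψ.ρ j = r ∧ R (ψ.ζ j) (ψ.twiceB j)}.ncard

theorem mCount_eq_oddCount (ψ : BlockColl ρT I) (x : I) :
    ψ.mCount x = ψ.oddCount (ψ.ρ x) (fun z t => z = -1 ∧ ψ.twiceB x < t) := by
  unfold mCount oddCount OddOdd twiceB
  congr 1
  ext j
  simp only [Set.mem_ofPred_eq]
  tauto

theorem nCount_eq_oddCount (ψ : BlockColl ρT I) (x : I) :
    ψ.nCount x = ψ.oddCount (ψ.ρ x) (fun _ t => t < ψ.twiceB x) := by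
  unfold nCount oddCount OddOdd twiceB
  congr 1
  ext j
  simp only [Set.mem_ofPred_eq]
  tauto

theorem epsMMW_eq_of_modEq {ψ : BlockColl ρT I} {ψ' : BlockColl ρT J} {x : I} {y : J}
    (ha : ψ'.a y = ψ.a x) (hb : ψ'.b y = ψ.b x) (hζ : ψ'.ζ y = ψ.ζ x)
    (hm : ψ'.mCount y ≡ ψ.mCount x [MOD 2]) (hn : ψ'.nCount y ≡ ψ.nCount x [MOD 2]) :
    ψ.epsMMW x = ψ'.epsMMW y := by
  unfold epsMMW
  rw [ha, hb, hζ, neg_one_pow_eq_pow_mod_two (ψ.mCount x),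
    neg_one_pow_eq_pow_mod_two (ψ'.mCount y), neg_one_pow_eq_pow_mod_two (ψ.mCount x + _),
    neg_one_pow_eq_pow_mod_two (ψ'.mCount y + _), Nat.add_mod (ψ'.mCount y), hm, hn,
    ← Nat.add_mod]

theorem twiceB_eq_zeta_mul (ψ : BlockColl ρT I) (i : I) :
    ψ.twiceB i = ψ.ζ i * (ψ.a i - ψ.b i) := by
  have hpos := ψ.ζ_sign_pos i
  have hneg := ψ.ζ_sign_neg i
  rw [twiceB, abs_eq_max_neg]
  rcases ψ.ζ_pm i with h | h <;> rw [h] at hpos hneg ⊢ <;> omega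

theorem twiceB_le_twiceA (ψ : BlockColl ρT I) (i : I) : ψ.twiceB i ≤ ψ.twiceA i := by
  have := ψ.a_pos i
  have := ψ.b_pos i
  rw [twiceB, twiceA, abs_eq_max_neg]
  omega

theorem twiceB_add_le_twiceA (ψ : BlockColl ρT I) {k : I} {c : ℕ}
    (hc : c < min (ψ.a k) (ψ.b k)) : ψ.twiceB k + 2 * c ≤ ψ.twiceA k := by
  rw [twiceB, twiceA, abs_eq_max_neg]
  omega

theorem twiceB_eq_of_shift {ψ : BlockColl ρT I} {ψ' : BlockColl ρT J} {k : I} {y : J} (c : ℕ)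
    (ha : (ψ'.a y : ℤ) = ψ.a k + c * ψ.ζ k) (hb : (ψ'.b y : ℤ) = ψ.b k - c * ψ.ζ k) :
    ψ'.twiceB y = ψ.twiceB k + 2 * c := by
  have hk := ψ.twiceB_eq_zeta_mul k
  simp only [twiceB, abs_eq_max_neg] at hk ⊢
  rw [ha, hb]
  rcases ψ.ζ_pm k with h | h <;> rw [h] at hk ⊢ <;> omega

theorem twiceB_mem_Icc_of_shift {ψ : BlockColl ρT I} {ψ' : BlockColl ρT J} {k : I} {y : J}
    (c : ℕ) (hc : c < min (ψ.a k) (ψ.b k))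
    (ha : (ψ'.a y : ℤ) = ψ.a k + c * ψ.ζ k) (hb : (ψ'.b y : ℤ) = ψ.b k - c * ψ.ζ k) :
    ψ'.twiceB y ∈ Set.Icc (ψ.twiceB k) (ψ.twiceA k) := by
  rw [twiceB_eq_of_shift c ha hb]
  exact ⟨by omega, ψ.twiceB_add_le_twiceA hc⟩

theorem oddOdd_iff_of_shift_two {ψ : BlockColl ρT I} {ψ' : BlockColl ρT J} {k : I} {y : J}
    (ha : (ψ'.a y : ℤ) = ψ.a k + 2 * ψ.ζ k) (hb : (ψ'.b y : ℤ) = ψ.b k - 2 * ψ.ζ k) :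
    ψ'.OddOdd y ↔ ψ.OddOdd k := by
  simp only [OddOdd, ← Int.odd_coe_nat, ha, hb, Int.odd_iff]
  omega

theorem twiceB_eq_and_oddOdd_iff_of_elementary {ψ : BlockColl ρT I} {ψ' : BlockColl ρT J}
    {k : I} {y : J}
    (hpos : ψ.ζ k = 1 → (ψ'.a y : ℤ) = ψ.twiceB k + 1 ∧ ψ'.b y = 1)
    (hneg : ψ.ζ k = -1 → ψ'.a y = 1 ∧ (ψ'.b y : ℤ) = ψ.twiceB k + 1) :
    ψ'.twiceB y = ψ.twiceB k ∧ (ψ'.OddOdd y ↔ Even (ψ.twiceB k)) := by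
  have h0 : 0 ≤ ψ.twiceB k := abs_nonneg _
  simp only [twiceB, OddOdd, ← Int.odd_coe_nat, abs_eq_max_neg, Int.odd_iff, Int.even_iff] at *
  rcases ψ.ζ_pm k with h | h
  · obtain ⟨ha, hb⟩ := hpos h
    rw [ha, hb]
    omega
  · obtain ⟨ha, hb⟩ := hneg h
    rw [ha, hb]
    omega

theorem oddOdd_iff_xor_of_split {ψ : BlockColl ρT I} {ψ' : BlockColl ρT J} {k : I} {y y' : J}
    (ha : (ψ'.a y : ℤ) = ψ.a k + ψ.ζ k) (hb : (ψ'.b y : ℤ) = ψ.b k - ψ.ζ k)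
    (hy' : ψ'.OddOdd y' ↔ Even (ψ.twiceB k)) :
    ψ.OddOdd k ↔ Xor (ψ'.OddOdd y) (ψ'.OddOdd y') := by
  have hζ : Odd (ψ.ζ k) := by rcases ψ.ζ_pm k with h | h <;> simp [h]
  rw [hy']
  simp only [OddOdd, ← Int.odd_coe_nat, ha, hb]
  exact Int.odd_and_odd_iff_xor hζ

def RelConstOnInterval (ψ : BlockColl ρT I) (k : I) (r : ρT) (R : ℤ → ℤ → Prop) : Prop :=
  ψ.ρ k = r → ∀ g ∈ Set.Icc (ψ.twiceB k) (ψ.twiceA k), (R (ψ.ζ k) g ↔ R (ψ.ζ k) (ψ.twiceB k))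

theorem RelConstOnInterval.rho_eq_and_iff {ψ : BlockColl ρT I} {ψ' : BlockColl ρT J} {k : I}
    {y : J} {r : ρT} {R : ℤ → ℤ → Prop} (hR : ψ.RelConstOnInterval k r R)
    (hρ : ψ'.ρ y = ψ.ρ k) (hζ : ψ'.ζ y = ψ.ζ k)
    (hB : ψ'.twiceB y ∈ Set.Icc (ψ.twiceB k) (ψ.twiceA k)) :
    (ψ'.ρ y = r ∧ R (ψ'.ζ y) (ψ'.twiceB y)) ↔ (ψ.ρ k = r ∧ R (ψ.ζ k) (ψ.twiceB k)) := by
  rw [hρ, hζ]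
  exact and_congr_right fun h => hR h _ hB

theorem oddCount_eq_of_replace {ψ ψ' : BlockColl ρT I} {k : I} {r : ρT} {R : ℤ → ℤ → Prop}
    (hρ : ∀ i, ψ'.ρ i = ψ.ρ i) (hζ : ∀ i, ψ'.ζ i = ψ.ζ i)
    (hab : ∀ i, i ≠ k → ψ'.a i = ψ.a i ∧ ψ'.b i = ψ.b i) (hodd : ψ'.OddOdd k ↔ ψ.OddOdd k)
    (hB : ψ'.twiceB k ∈ Set.Icc (ψ.twiceB k) (ψ.twiceA k)) (hR : ψ.RelConstOnInterval k r R) :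
    ψ'.oddCount r R = ψ.oddCount r R := by
  unfold oddCount
  congr 1
  ext j
  by_cases hj : j = k
  · subst hj
    exact and_congr hodd (hR.rho_eq_and_iff (hρ j) (hζ j) hB)
  · simp only [Set.mem_ofPred_eq, OddOdd, twiceB, hρ, hζ, (hab j hj).1, (hab j hj).2]

theorem oddCount_modEq_of_split [Finite I] {ψ : BlockColl ρT I} {ψ' : BlockColl ρT (Option I)}
    {k : I} {r : ρT} {R : ℤ → ℤ → Prop}
    (hρ : ∀ i, ψ'.ρ (some i) = ψ.ρ i) (hζ : ∀ i, ψ'.ζ (some i) = ψ.ζ i)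
    (hab : ∀ i, i ≠ k → ψ'.a (some i) = ψ.a i ∧ ψ'.b (some i) = ψ.b i)
    (hρnone : ψ'.ρ none = ψ.ρ k) (hζnone : ψ'.ζ none = ψ.ζ k)
    (hodd : ψ.OddOdd k ↔ Xor (ψ'.OddOdd (some k)) (ψ'.OddOdd none))
    (hBk : ψ'.twiceB (some k) ∈ Set.Icc (ψ.twiceB k) (ψ.twiceA k))
    (hBnone : ψ'.twiceB none ∈ Set.Icc (ψ.twiceB k) (ψ.twiceA k))
    (hR : ψ.RelConstOnInterval k r R) :
    ψ'.oddCount r R ≡ ψ.oddCount r R [MOD 2] := by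
  refine Set.ncard_option_modEq_of_xor (k := k) (fun i hi => ?_) ?_
  · simp only [Set.mem_ofPred_eq, OddOdd, twiceB, hρ, hζ, (hab i hi).1, (hab i hi).2]
  · simp only [Set.mem_ofPred_eq]
    rw [hR.rho_eq_and_iff (hρ k) (hζ k) hBk, hR.rho_eq_and_iff hρnone hζnone hBnone, hodd]
    unfold Xor
    tauto

theorem ddr.twiceB_lt_iff {ψ : BlockColl ρT I} (hddr : ψ.ddr) {k x : I} (hx : x ≠ k)
    (hρ : ψ.ρ k = ψ.ρ x) {g : ℤ} (hg : g ∈ Set.Icc (ψ.twiceB k) (ψ.twiceA k)) :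
    (ψ.twiceB x < g ↔ ψ.twiceB x < ψ.twiceB k) ∧ (g < ψ.twiceB x ↔ ψ.twiceB k < ψ.twiceB x) := by
  have hx' := ψ.twiceB_le_twiceA x
  have hsep : ψ.twiceA k < ψ.twiceB x ∨ ψ.twiceA x < ψ.twiceB k := hddr k x hx.symm hρ
  obtain ⟨hg₁, hg₂⟩ := hg
  omega

theorem epsMMW_eq_of_oddCount_modEq {ψ : BlockColl ρT I} {ψ' : BlockColl ρT J} (hddr : ψ.ddr)
    {k x : I} {y : J} (hx : x ≠ k) (hρ : ψ'.ρ y = ψ.ρ x) (ha : ψ'.a y = ψ.a x)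
    (hb : ψ'.b y = ψ.b x) (hζ : ψ'.ζ y = ψ.ζ x)
    (hcount : ∀ R, ψ.RelConstOnInterval k (ψ.ρ x) R →
      ψ'.oddCount (ψ.ρ x) R ≡ ψ.oddCount (ψ.ρ x) R [MOD 2]) :
    ψ.epsMMW x = ψ'.epsMMW y := by
  have hB : ψ'.twiceB y = ψ.twiceB x := by rw [twiceB, twiceB, ha, hb]
  refine epsMMW_eq_of_modEq ha hb hζ ?_ ?_
  · rw [mCount_eq_oddCount, mCount_eq_oddCount, hρ, hB]
    exact hcount _ fun hρk g hg => and_congr_right' (hddr.twiceB_lt_iff hx hρk hg).1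
  · rw [nCount_eq_oddCount, nCount_eq_oddCount, hρ, hB]
    exact hcount _ fun hρk g hg => (hddr.twiceB_lt_iff hx hρk hg).2

end BlockColl

open BlockColl

/-- replacing the block `k = (ρ, a, b)` (with `A_k > B_k`) of `ψ` by
`(ρ, a+2ζ, b−2ζ)` (giving `ψ¹`, provided `A_k ≥ B_k + 2`), or by the two blocks
`(ρ, a+ζ, b−ζ)` and the block with invariants `(B_k, B_k, ζ)` (giving `ψ²`), does not
change `ε^{M/MW}` at any block `x ≠ k`. -/
theorem statement19 (ρT I : Type*) [Fintype I]
    (ψ : BlockColl ρT I) (hddr : ψ.ddr)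
    (k : I) (hk : 1 < min (ψ.a k) (ψ.b k))
    (ψ2 : BlockColl ρT (Option I))
    (hρ2 : ∀ i : I, ψ2.ρ (some i) = ψ.ρ i)
    (hζ2 : ∀ i : I, ψ2.ζ (some i) = ψ.ζ i)
    (hab2 : ∀ i : I, i ≠ k → ψ2.a (some i) = ψ.a i ∧ ψ2.b (some i) = ψ.b i)
    (hak2 : (ψ2.a (some k) : ℤ) = ψ.a k + ψ.ζ k)
    (hbk2 : (ψ2.b (some k) : ℤ) = ψ.b k - ψ.ζ k)
    (hρnone : ψ2.ρ none = ψ.ρ k) (hζnone : ψ2.ζ none = ψ.ζ k)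
    (hnone_pos : ψ.ζ k = 1 → (ψ2.a none : ℤ) = |(ψ.a k : ℤ) - ψ.b k| + 1 ∧ ψ2.b none = 1)
    (hnone_neg : ψ.ζ k = -1 → ψ2.a none = 1 ∧ (ψ2.b none : ℤ) = |(ψ.a k : ℤ) - ψ.b k| + 1) :
    (∀ x : I, x ≠ k → ψ.epsMMW x = ψ2.epsMMW (some x)) ∧
    (2 < min (ψ.a k) (ψ.b k) →
      ∀ ψ1 : BlockColl ρT I,
        (∀ i, ψ1.ρ i = ψ.ρ i) → (∀ i, ψ1.ζ i = ψ.ζ i) →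
        (∀ i, i ≠ k → ψ1.a i = ψ.a i ∧ ψ1.b i = ψ.b i) →
        (ψ1.a k : ℤ) = ψ.a k + 2 * ψ.ζ k → (ψ1.b k : ℤ) = ψ.b k - 2 * ψ.ζ k →
        ∀ x : I, x ≠ k → ψ.epsMMW x = ψ1.epsMMW x) := by
  refine ⟨fun x hx => ?_, fun hk2 ψ1 hρ1 hζ1 hab1 hak1 hbk1 x hx => ?_⟩
  · refine epsMMW_eq_of_oddCount_modEq hddr hx (hρ2 x) (hab2 x hx).1 (hab2 x hx).2 (hζ2 x)
      fun R hR => ?_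
    have hak : (ψ2.a (some k) : ℤ) = ψ.a k + (1 : ℕ) * ψ.ζ k := by simpa using hak2
    have hbk : (ψ2.b (some k) : ℤ) = ψ.b k - (1 : ℕ) * ψ.ζ k := by simpa using hbk2
    obtain ⟨hBnone, hoddnone⟩ := twiceB_eq_and_oddOdd_iff_of_elementary hnone_pos hnone_neg
    refine oddCount_modEq_of_split hρ2 hζ2 hab2 hρnone hζnone
      (oddOdd_iff_xor_of_split hak2 hbk2 hoddnone) (twiceB_mem_Icc_of_shift 1 hk hak hbk)
      ?_ hR
    rw [hBnone]
    exact ⟨le_rfl, ψ.twiceB_le_twiceA k⟩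
  · refine epsMMW_eq_of_oddCount_modEq hddr hx (hρ1 x) (hab1 x hx).1 (hab1 x hx).2 (hζ1 x)
      fun R hR => ?_
    have hak : (ψ1.a k : ℤ) = ψ.a k + (2 : ℕ) * ψ.ζ k := by exact_mod_cast hak1
    have hbk : (ψ1.b k : ℤ) = ψ.b k - (2 : ℕ) * ψ.ζ k := by exact_mod_cast hbk1
    rw [oddCount_eq_of_replace hρ1 hζ1 hab1 (oddOdd_iff_of_shift_two hak1 hbk1)
      (twiceB_mem_Icc_of_shift 2 hk2 hak hbk) hR]
end
end
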